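/- arXiv:2602.15209 — 2 statements merged into one kernel-verified Lean document; each statement's English description precedes it below -/
import Mathlib

section
/- Let E be a normed additive commutative group, x : ℕ → E, f : E → ℝ, F ∈ ℝ with f(x(t)) ≤ F for all t, γ > 0, and ε : ℕ → ℝ nonnegative. If f(x(t+1)) ≥ f(x(t)) + γ·‖x(t+1) − x(t)‖² − ε(t) for every t, then for every integer T ≥ 1: min_{0 ≤ k ≤ T−1} ‖x(k+1) − x(k)‖² ≤ (F − f(x(0)) + Σ_{k=0}^{T−1} ε(k)) / (γ·T). -/
/-- Non-asymptotic `O(1/T)` rate: under the sufficient-increase inequality with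
bounded objective, the smallest squared step among the first `T` iterations is at most
`(F - f(x 0) + ∑_{k<T} ε k) / (γ T)`. -/
theorem min_squared_step_rate
    {E : Type*} [NormedAddCommGroup E]
    (x : ℕ → E) (f : E → ℝ) (F : ℝ) (hF : ∀ t, f (x t) ≤ F)
    (γ : ℝ) (hγ : 0 < γ)
    (ε : ℕ → ℝ) (hε : ∀ t, 0 ≤ ε t)
    (hstep : ∀ t, f (x (t + 1)) ≥ f (x t) + γ * ‖x (t + 1) - x t‖ ^ 2 - ε t) :
    ∀ (T : ℕ) (hT : 1 ≤ T),
      ((Finset.range T).inf' (Finset.nonempty_range_iff.mpr (by omega))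
          fun k => ‖x (k + 1) - x k‖ ^ 2)
        ≤ (F - f (x 0) + ∑ k ∈ Finset.range T, ε k) / (γ * T) := by
  intro T hT
  have hne : (Finset.range T).Nonempty := Finset.nonempty_range_iff.mpr (by omega)
  set m := (Finset.range T).inf' hne (fun k => ‖x (k + 1) - x k‖ ^ 2) with hm
  have hTpos : (0 : ℝ) < T := by exact_mod_cast hT
  rw [le_div_iff₀ (by positivity)]
  have hsum1 : ∑ k ∈ Finset.range T, γ * ‖x (k + 1) - x k‖ ^ 2
      ≤ ∑ k ∈ Finset.range T, (f (x (k + 1)) - f (x k) + ε k) := by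
    apply Finset.sum_le_sum
    intro k _
    have := hstep k
    linarith
  have hsum2 : ∑ k ∈ Finset.range T, (f (x (k + 1)) - f (x k) + ε k)
      = f (x T) - f (x 0) + ∑ k ∈ Finset.range T, ε k := by
    rw [Finset.sum_add_distrib, Finset.sum_range_sub (fun k => f (x k))]
  have hlow : (T : ℝ) * (γ * m) ≤ ∑ k ∈ Finset.range T, γ * ‖x (k + 1) - x k‖ ^ 2 := by
    have := Finset.card_nsmul_le_sum (Finset.range T)
      (fun k => γ * ‖x (k + 1) - x k‖ ^ 2) (γ * m) ?_
    · simpa [Finset.card_range, nsmul_eq_mul] using this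
    · intro k hk
      exact mul_le_mul_of_nonneg_left (Finset.inf'_le _ hk) hγ.le
  have hFT := hF T
  nlinarith [hsum1, hsum2, hlow]
end

section
/- Let A be an n×n complex matrix, B an n×m complex matrix, and D an m×m complex matrix such that J = fromBlocks A B Bᴴ D is Hermitian positive definite. Let μ ∈ ℝ satisfy Re(y* D y) ≥ μ·‖y‖² for all y ∈ ℂᵐ, and suppose μ > ‖B‖_F² · ‖A⁻¹‖_op, where ‖·‖_F is the Frobenius norm and ‖·‖_op the ℓ²→ℓ² operator norm. Then 0 ≤ Re Tr((J⁻¹)₁₁) − Re Tr(A⁻¹) ≤ ‖B‖_F² · Re Tr(A⁻²) / (μ − ‖B‖_F² · ‖A⁻¹‖_op), where (J⁻¹)₁₁ denotes the top-left n×n block of J⁻¹. -/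
open Matrix
open scoped ComplexOrder

/-- The ℓ²→ℓ² operator norm of a square complex matrix. -/
noncomputable def l2OpNorm {n : ℕ} (M : Matrix (Fin n) (Fin n) ℂ) : ℝ :=
  ‖Matrix.toEuclideanCLM (𝕜 := ℂ) M‖

/-- Squared Frobenius norm of a rectangular complex matrix. -/
noncomputable def frobSq {n m : ℕ} (B : Matrix (Fin n) (Fin m) ℂ) : ℝ :=
  ∑ i, ∑ j, ‖B i j‖ ^ 2

/-!
With the Schur complement `S = D - Bᴴ A⁻¹ B`, the top-left block of `J⁻¹` is
`A⁻¹ + X S⁻¹ Xᴴ` for `X = A⁻¹ B`, so the gap is `Re Tr (X S⁻¹ Xᴴ) = ∑ᵢ Re (vᵢ* S⁻¹ vᵢ)`,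
`vᵢ` the conjugated rows of `X`. The bound on `D` makes `S` coercive with constant
`c = μ - ‖B‖_F² ‖A⁻¹‖`, and for coercive `S` each `Re (v* S⁻¹ v)` lies in `[0, ‖v‖² / c]`.
Finally `‖X‖_F² ≤ ‖A⁻¹‖_F² ‖B‖_F² = Re Tr (A⁻²) ‖B‖_F²` because `A⁻¹` is Hermitian.
-/

namespace Matrix

variable {ι : Type*} [Fintype ι]

lemma re_star_dotProduct_le (x y : ι → ℂ) :
    (star x ⬝ᵥ y).re ≤
      ‖(WithLp.toLp 2 x : EuclideanSpace ℂ ι)‖ * ‖(WithLp.toLp 2 y : EuclideanSpace ℂ ι)‖ := by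
  rw [dotProduct_comm]
  exact re_inner_le_norm (𝕜 := ℂ) (WithLp.toLp 2 x : EuclideanSpace ℂ ι) (WithLp.toLp 2 y)

lemma norm_sq_dotProduct_le (x y : ι → ℂ) :
    ‖x ⬝ᵥ y‖ ^ 2 ≤ (∑ i, ‖x i‖ ^ 2) * ∑ i, ‖y i‖ ^ 2 :=
  calc ‖x ⬝ᵥ y‖ ^ 2 ≤ (∑ i, ‖x i‖ * ‖y i‖) ^ 2 := by
        gcongr
        exact (norm_sum_le _ _).trans_eq (by simp only [norm_mul])
    _ ≤ (∑ i, ‖x i‖ ^ 2) * ∑ i, ‖y i‖ ^ 2 := Finset.sum_mul_sq_le_sq_mul_sq _ _ _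

/-- For Hermitian `S` this says `c ≤ λ_min S`. -/
def IsCoerciveWith (S : Matrix ι ι ℂ) (c : ℝ) : Prop :=
  ∀ y : ι → ℂ, c * ∑ i, ‖y i‖ ^ 2 ≤ (star y ⬝ᵥ S *ᵥ y).re

namespace IsCoerciveWith

variable [DecidableEq ι] {S : Matrix ι ι ℂ} {c : ℝ}

lemma isUnit (hS : S.IsCoerciveWith c) (hc : 0 < c) : IsUnit S := by
  refine mulVec_injective_iff_isUnit.mp fun a b hab => ?_
  have h := hS (a - b)
  rw [mulVec_sub, hab, sub_self, dotProduct_zero, Complex.zero_re] at h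
  have h0 : ∑ i, ‖(a - b) i‖ ^ 2 = 0 :=
    le_antisymm (nonpos_of_mul_nonpos_right h hc) (by positivity)
  ext i
  simpa [sub_eq_zero] using (Finset.sum_eq_zero_iff_of_nonneg (fun i _ => by positivity)).1 h0 i
    (Finset.mem_univ i)

lemma mul_sum_norm_sq_inv_mulVec_le (hS : S.IsCoerciveWith c) (hc : 0 < c) (v : ι → ℂ) :
    c * ∑ i, ‖(S⁻¹ *ᵥ v) i‖ ^ 2 ≤ (star v ⬝ᵥ S⁻¹ *ᵥ v).re := by
  have hv : S *ᵥ S⁻¹ *ᵥ v = v := by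
    rw [mulVec_mulVec, mul_nonsing_inv _ ((isUnit_iff_isUnit_det S).1 (hS.isUnit hc)), one_mulVec]
  calc c * ∑ i, ‖(S⁻¹ *ᵥ v) i‖ ^ 2 ≤ (star (S⁻¹ *ᵥ v) ⬝ᵥ v).re := by
        simpa only [hv] using hS (S⁻¹ *ᵥ v)
    _ = (star v ⬝ᵥ S⁻¹ *ᵥ v).re := by rw [star_dotProduct]; exact Complex.conj_re _

lemma re_star_dotProduct_inv_mulVec_nonneg (hS : S.IsCoerciveWith c) (hc : 0 < c)
    (v : ι → ℂ) : 0 ≤ (star v ⬝ᵥ S⁻¹ *ᵥ v).re :=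
  (mul_nonneg hc.le (by positivity)).trans (hS.mul_sum_norm_sq_inv_mulVec_le hc v)

lemma re_star_dotProduct_inv_mulVec_le (hS : S.IsCoerciveWith c) (hc : 0 < c) (v : ι → ℂ) :
    (star v ⬝ᵥ S⁻¹ *ᵥ v).re ≤ (∑ i, ‖v i‖ ^ 2) / c := by
  set a := ‖(WithLp.toLp 2 v : EuclideanSpace ℂ ι)‖
  set b := ‖(WithLp.toLp 2 (S⁻¹ *ᵥ v) : EuclideanSpace ℂ ι)‖
  have hlow : c * b ^ 2 ≤ (star v ⬝ᵥ S⁻¹ *ᵥ v).re := by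
    simpa only [b, EuclideanSpace.norm_sq_eq] using hS.mul_sum_norm_sq_inv_mulVec_le hc v
  have hup : (star v ⬝ᵥ S⁻¹ *ᵥ v).re ≤ a * b := re_star_dotProduct_le v (S⁻¹ *ᵥ v)
  have hb : 0 ≤ b := norm_nonneg _
  rw [← EuclideanSpace.norm_sq_eq, le_div_iff₀ hc]
  -- `c b² ≤ a b` forces `c b ≤ a`, hence the form is at most `a b ≤ a² / c`
  nlinarith [mul_nonneg hc.le (mul_nonneg hb (sub_nonneg.2 (hlow.trans hup))),
    sq_nonneg (a - c * b)]

end IsCoerciveWith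

lemma trace_mul_mul_conjTranspose {κ : Type*} [Fintype κ] (X : Matrix κ ι ℂ)
    (S : Matrix ι ι ℂ) : (X * S * Xᴴ).trace = ∑ i, X i ⬝ᵥ S *ᵥ star (X i) := by
  rw [Matrix.mul_assoc]
  rfl

lemma toBlocks₁₁_inv_fromBlocks {κ K : Type*} [Fintype κ] [DecidableEq ι] [DecidableEq κ]
    [Field K] {A : Matrix ι ι K} {B : Matrix ι κ K} {C : Matrix κ ι K} {D : Matrix κ κ K}
    (hA : IsUnit A) (hS : IsUnit (D - C * A⁻¹ * B)) :
    (fromBlocks A B C D)⁻¹.toBlocks₁₁ = A⁻¹ + A⁻¹ * B * (D - C * A⁻¹ * B)⁻¹ * C * A⁻¹ := by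
  let := hA.invertible
  let : Invertible (D - C * ⅟A * B) := by rw [invOf_eq_nonsing_inv]; exact hS.invertible
  let := fromBlocks₁₁Invertible A B C D
  rw [← invOf_eq_nonsing_inv, invOf_fromBlocks₁₁_eq, toBlocks_fromBlocks₁₁]
  simp only [invOf_eq_nonsing_inv]

end Matrix

section FiniteDimensional

variable {l n m : ℕ}

lemma l2OpNorm_nonneg (M : Matrix (Fin n) (Fin n) ℂ) : 0 ≤ l2OpNorm M :=
  norm_nonneg _

lemma re_star_dotProduct_mulVec_le_l2OpNorm (M : Matrix (Fin n) (Fin n) ℂ) (x : Fin n → ℂ) :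
    (star x ⬝ᵥ M *ᵥ x).re ≤ l2OpNorm M * ∑ i, ‖x i‖ ^ 2 := by
  set u : EuclideanSpace ℂ (Fin n) := WithLp.toLp 2 x
  calc (star x ⬝ᵥ M *ᵥ x).re ≤ ‖u‖ * ‖toEuclideanCLM (𝕜 := ℂ) M u‖ := re_star_dotProduct_le _ _
    _ ≤ ‖u‖ * (l2OpNorm M * ‖u‖) := by gcongr; exact (toEuclideanCLM (𝕜 := ℂ) M).le_opNorm u
    _ = l2OpNorm M * ∑ i, ‖x i‖ ^ 2 := by rw [← EuclideanSpace.norm_sq_eq u]; ring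

lemma sum_norm_sq_mulVec_le_frobSq (B : Matrix (Fin n) (Fin m) ℂ) (y : Fin m → ℂ) :
    ∑ i, ‖(B *ᵥ y) i‖ ^ 2 ≤ frobSq B * ∑ j, ‖y j‖ ^ 2 := by
  rw [frobSq, Finset.sum_mul]
  exact Finset.sum_le_sum fun i _ => norm_sq_dotProduct_le (B i) y

lemma frobSq_mul_le (M : Matrix (Fin l) (Fin n) ℂ) (B : Matrix (Fin n) (Fin m) ℂ) :
    frobSq (M * B) ≤ frobSq M * frobSq B :=
  calc frobSq (M * B) ≤ ∑ i, ∑ j, (∑ k, ‖M i k‖ ^ 2) * ∑ k, ‖B k j‖ ^ 2 :=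
        Finset.sum_le_sum fun i _ => Finset.sum_le_sum fun j _ => norm_sq_dotProduct_le _ _
    _ = frobSq M * frobSq B := by
        simp_rw [← Finset.mul_sum, frobSq, Finset.sum_mul]
        rw [Finset.sum_comm (γ := Fin n)]

lemma re_trace_mul_conjTranspose_self (M : Matrix (Fin n) (Fin m) ℂ) :
    (M * Mᴴ).trace.re = frobSq M := by
  simp only [trace, diag_apply, mul_apply, conjTranspose_apply, RCLike.star_def, Complex.mul_conj,
    Complex.normSq_eq_norm_sq, Complex.ofReal_pow, Complex.re_sum, frobSq]
  norm_cast

lemma isCoerciveWith_sub_conjTranspose_mul_mul {D : Matrix (Fin m) (Fin m) ℂ} {μ : ℝ}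
    (hD : D.IsCoerciveWith μ) (M : Matrix (Fin n) (Fin n) ℂ) (B : Matrix (Fin n) (Fin m) ℂ) :
    (D - Bᴴ * M * B).IsCoerciveWith (μ - frobSq B * l2OpNorm M) := by
  intro y
  have hquad : star y ⬝ᵥ (Bᴴ * M * B) *ᵥ y = star (B *ᵥ y) ⬝ᵥ M *ᵥ B *ᵥ y := by
    rw [← mulVec_mulVec, ← mulVec_mulVec, dotProduct_mulVec, ← star_mulVec]
  have hM := re_star_dotProduct_mulVec_le_l2OpNorm M (B *ᵥ y)
  have hB := mul_le_mul_of_nonneg_left (sum_norm_sq_mulVec_le_frobSq B y) (l2OpNorm_nonneg M)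
  rw [sub_mulVec, dotProduct_sub, Complex.sub_re, hquad]
  linarith [hD y]

variable {S : Matrix (Fin m) (Fin m) ℂ} {c : ℝ}

lemma Matrix.IsCoerciveWith.re_trace_mul_inv_mul_conjTranspose_nonneg (hS : S.IsCoerciveWith c)
    (hc : 0 < c) (X : Matrix (Fin n) (Fin m) ℂ) : 0 ≤ (X * S⁻¹ * Xᴴ).trace.re := by
  rw [trace_mul_mul_conjTranspose, Complex.re_sum]
  exact Finset.sum_nonneg fun i _ => by
    simpa using hS.re_star_dotProduct_inv_mulVec_nonneg hc (star (X i))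

lemma Matrix.IsCoerciveWith.re_trace_mul_inv_mul_conjTranspose_le (hS : S.IsCoerciveWith c)
    (hc : 0 < c) (X : Matrix (Fin n) (Fin m) ℂ) : (X * S⁻¹ * Xᴴ).trace.re ≤ frobSq X / c := by
  rw [trace_mul_mul_conjTranspose, Complex.re_sum, frobSq, Finset.sum_div]
  exact Finset.sum_le_sum fun i _ => by
    simpa using hS.re_star_dotProduct_inv_mulVec_le hc (star (X i))

end FiniteDimensional

/-- Absolute-error bound for the Schur-complement CRB approximation: if
`J = fromBlocks A B Bᴴ D` is Hermitian positive definite, `Re(y* D y) ≥ μ ‖y‖²` for all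
`y`, and `μ > ‖B‖_F² ‖A⁻¹‖_op`, then the gap `Re Tr((J⁻¹)₁₁) − Re Tr(A⁻¹)` lies in
`[0, ‖B‖_F² · Re Tr(A⁻²) / (μ − ‖B‖_F² ‖A⁻¹‖_op)]`. -/
theorem crb_gap_absolute_error_bound
    (n m : ℕ)
    (A : Matrix (Fin n) (Fin n) ℂ) (B : Matrix (Fin n) (Fin m) ℂ)
    (D : Matrix (Fin m) (Fin m) ℂ)
    (hJ : (fromBlocks A B Bᴴ D).PosDef)
    (μ : ℝ)
    (hμ : ∀ y : Fin m → ℂ, (star y ⬝ᵥ D.mulVec y).re ≥ μ * ∑ i, ‖y i‖ ^ 2)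
    (hgap : frobSq B * l2OpNorm A⁻¹ < μ) :
    0 ≤ (((fromBlocks A B Bᴴ D)⁻¹.toBlocks₁₁).trace).re - ((A⁻¹).trace).re ∧
      (((fromBlocks A B Bᴴ D)⁻¹.toBlocks₁₁).trace).re - ((A⁻¹).trace).re ≤
        frobSq B * ((A⁻¹ * A⁻¹).trace).re / (μ - frobSq B * l2OpNorm A⁻¹) := by
  have hA : A.PosDef := hJ.submatrix Sum.inl_injective
  have hAinv : (A⁻¹)ᴴ = A⁻¹ := hA.isHermitian.inv.eq
  have hc : 0 < μ - frobSq B * l2OpNorm A⁻¹ := sub_pos.2 hgap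
  have hS := isCoerciveWith_sub_conjTranspose_mul_mul hμ A⁻¹ B
  have hgap_eq : (((fromBlocks A B Bᴴ D)⁻¹.toBlocks₁₁).trace).re - ((A⁻¹).trace).re =
      ((A⁻¹ * B) * (D - Bᴴ * A⁻¹ * B)⁻¹ * (A⁻¹ * B)ᴴ).trace.re := by
    rw [toBlocks₁₁_inv_fromBlocks hA.isUnit (hS.isUnit hc), trace_add, Complex.add_re,
      add_sub_cancel_left, conjTranspose_mul, hAinv]
    simp only [Matrix.mul_assoc]
  have hfrob : frobSq (A⁻¹ * B) ≤ frobSq B * ((A⁻¹ * A⁻¹).trace).re :=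
    calc frobSq (A⁻¹ * B) ≤ frobSq A⁻¹ * frobSq B := frobSq_mul_le _ _
      _ = frobSq B * ((A⁻¹ * A⁻¹).trace).re := by
        rw [← re_trace_mul_conjTranspose_self A⁻¹, hAinv, mul_comm]
  rw [hgap_eq]
  exact ⟨hS.re_trace_mul_inv_mul_conjTranspose_nonneg hc _,
    (hS.re_trace_mul_inv_mul_conjTranspose_le hc _).trans (div_le_div_of_nonneg_right hfrob hc.le)⟩
end
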